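/- arXiv:2411.15282 — 5 statements merged into one kernel-verified Lean document; each statement's English description precedes it below -/
import Mathlib

section
/- Let G be a connected graph that contains no tree with more than r leaves as a subgraph. If G contains a vertex-disjoint collection of stars K_{1,r_1}, ..., K_{1,r_p} as subgraphs with each r_i \ge 3, then \sum_{i=1}^p r_i \le 3r (and in particular p \le r). -/
open Finset

/-- The set of leaves of a subgraph: vertices of the subgraph with exactly one neighbor. -/
def subgraphLeaves {V : Type*} {G : SimpleGraph V} (H : G.Subgraph) : Set V :=
  {v ∈ H.verts | (H.neighborSet v).ncard = 1}

/-!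
The star edges form a forest, which extends to a spanning tree `T` of `G`. In a finite tree
`∑ (deg v - 2) = -2`, so `T` has at least `2 + ∑ (r_i - 2)` leaves; as `r_i ≥ 3`, this is at
least `2 + (∑ r_i) / 3`. Hence `∑ r_i ≤ 3r - 6`, and `p ≤ r` because `3p ≤ ∑ r_i`.
-/

open SimpleGraph Function

namespace SimpleGraph
variable {V : Type*} {G : SimpleGraph V}

lemma not_reachable_deleteEdges_of_neighborSet_eq_singleton {u v : V}
    (hu : G.neighborSet u = {v}) (huv : u ≠ v) :
    ¬ (G.deleteEdges {s(u, v)}).Reachable u v := by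
  rintro ⟨_ | ⟨hadj, _⟩⟩
  · exact huv rfl
  · rw [deleteEdges_adj] at hadj
    have hx : _ ∈ G.neighborSet u := hadj.1
    rw [hu, Set.mem_singleton_iff] at hx
    exact hadj.2 (by rw [hx]; rfl)

lemma isAcyclic_of_forall_adj_neighborSet_eq_singleton
    (h : ∀ ⦃u v⦄, G.Adj u v → G.neighborSet u = {v} ∨ G.neighborSet v = {u}) :
    G.IsAcyclic := by
  rw [isAcyclic_iff_forall_adj_isBridge]
  intro u v huv
  rcases h huv with hu | hv
  · exact isBridge_iff.mpr (not_reachable_deleteEdges_of_neighborSet_eq_singleton hu huv.ne)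
  · rw [Sym2.eq_swap]
    exact isBridge_iff.mpr (not_reachable_deleteEdges_of_neighborSet_eq_singleton hv huv.ne.symm)

lemma IsTree.sum_degree_add_two_le [Fintype V] [Nontrivial V] [DecidableRel G.Adj]
    (hG : G.IsTree) (C : Finset V) :
    ∑ v ∈ C, G.degree v + 2 ≤ 2 * #C + #{v | G.degree v = 1} := by
  classical
  have hpos (v : V) : 0 < G.degree v := hG.connected.preconnected.degree_pos_of_nontrivial v
  have hrest : 2 * #(univ \ C) ≤ ∑ v ∈ univ \ C, G.degree v + #{v | G.degree v = 1} := by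
    calc 2 * #(univ \ C) = ∑ v ∈ univ \ C, 2 := by rw [sum_const, smul_eq_mul, mul_comm]
      _ ≤ ∑ v ∈ univ \ C, (G.degree v + if G.degree v = 1 then 1 else 0) := by
          gcongr with v
          have := hpos v
          split_ifs <;> omega
      _ = ∑ v ∈ univ \ C, G.degree v + #{v ∈ univ \ C | G.degree v = 1} := by
          rw [sum_add_distrib, sum_boole, Nat.cast_id]
      _ ≤ _ := by gcongr; exact subset_univ _
  have hsplit := sum_sdiff (subset_univ C) (f := fun v => G.degree v)
  have hcard := card_sdiff_add_card_eq_card (subset_univ C)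
  have hsum := G.sum_degrees_eq_twice_card_edges
  have hedges := hG.card_edgeFinset
  rw [card_univ] at hcard
  omega

lemma isTree_coe_toSubgraph {T : SimpleGraph V} (hTG : T ≤ G) (hT : T.IsTree) :
    (toSubgraph T hTG).coe.IsTree :=
  (Subgraph.spanningCoeEquivCoeOfSpanning _ (toSubgraph.isSpanning T hTG)).isTree_iff.mp hT

lemma ncard_subgraphLeaves_toSubgraph [Fintype V] {T : SimpleGraph V} [DecidableRel T.Adj]
    (hTG : T ≤ G) : (subgraphLeaves (toSubgraph T hTG)).ncard = #{v | T.degree v = 1} := by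
  have hdeg (v : V) : (T.neighborSet v).ncard = T.degree v := by
    rw [← card_neighborFinset_eq_degree, ← Set.ncard_coe_finset, coe_neighborFinset]
  rw [← Set.ncard_coe_finset]
  congr 1
  ext v
  change v ∈ Set.univ ∧ (T.neighborSet v).ncard = 1 ↔ _
  simp [hdeg]

section StarForest

variable {ι : Type*} (c : ι → V) (S : ι → Finset V)

def starForest : SimpleGraph V :=
  fromRel fun u v => ∃ i, u = c i ∧ v ∈ S i

variable {c S}

lemma starForest_le (hadj : ∀ i, ∀ v ∈ S i, G.Adj (c i) v) : starForest c S ≤ G := by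
  rintro u v ⟨-, ⟨i, rfl, hv⟩ | ⟨i, rfl, hu⟩⟩
  · exact hadj i v hv
  · exact (hadj i u hu).symm

lemma starForest_adj_of_mem {i : ι} {v : V} (hv : v ∈ S i) (hcS : c i ∉ S i) :
    (starForest c S).Adj (c i) v :=
  ⟨fun h => hcS (h ▸ hv), .inl ⟨i, rfl, hv⟩⟩

lemma neighborSet_starForest_of_mem (hc : ∀ i j, c j ∉ S i)
    (hS : ∀ i j, ∀ v ∈ S i, v ∈ S j → i = j) {i : ι} {v : V} (hv : v ∈ S i) :
    (starForest c S).neighborSet v = {c i} := by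
  ext w
  refine ⟨?_, ?_⟩
  · rintro ⟨-, ⟨j, rfl, -⟩ | ⟨j, rfl, hvj⟩⟩
    · exact absurd hv (hc i j)
    · rw [hS i j v hv hvj]; rfl
  · rintro rfl
    exact (starForest_adj_of_mem hv (hc i i)).symm

lemma starForest_isAcyclic (hc : ∀ i j, c j ∉ S i)
    (hS : ∀ i j, ∀ v ∈ S i, v ∈ S j → i = j) : (starForest c S).IsAcyclic := by
  refine isAcyclic_of_forall_adj_neighborSet_eq_singleton ?_
  rintro u v ⟨-, ⟨i, rfl, hv⟩ | ⟨i, rfl, hu⟩⟩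
  · exact .inr (neighborSet_starForest_of_mem hc hS hv)
  · exact .inl (neighborSet_starForest_of_mem hc hS hu)

end StarForest

end SimpleGraph

section DisjointStars

variable {ι V : Type*} [DecidableEq V] {c : ι → V} {S : ι → Finset V}

lemma Pairwise.injective_of_disjoint_insert
    (h : Pairwise (Disjoint on fun i => insert (c i) (S i))) : Injective c :=
  fun _ _ hij => by_contra fun hne =>
    Finset.disjoint_left.mp (h hne) (mem_insert_self _ _) (hij ▸ mem_insert_self _ _)

lemma Pairwise.notMem_of_disjoint_insert
    (h : Pairwise (Disjoint on fun i => insert (c i) (S i))) (hcS : ∀ i, c i ∉ S i) (i j : ι) :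
    c j ∉ S i := by
  rcases eq_or_ne i j with rfl | hij
  · exact hcS i
  · exact fun hj => Finset.disjoint_left.mp (h hij) (mem_insert_of_mem hj) (mem_insert_self _ _)

lemma Pairwise.eq_of_mem_of_disjoint_insert
    (h : Pairwise (Disjoint on fun i => insert (c i) (S i))) (i j : ι) (v : V)
    (hi : v ∈ S i) (hj : v ∈ S j) : i = j :=
  by_contra fun hij =>
    Finset.disjoint_left.mp (h hij) (mem_insert_of_mem hi) (mem_insert_of_mem hj)

end DisjointStars

theorem star_packing_bound_general {V : Type*} [Fintype V] [DecidableEq V]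
    (G : SimpleGraph V) (hG : G.Connected) (r : ℕ)
    (hleaves : ∀ H : G.Subgraph, H.coe.IsTree → (subgraphLeaves H).ncard ≤ r)
    (p : ℕ) (rfun : Fin p → ℕ) (c : Fin p → V) (S : Fin p → Finset V)
    (hr3 : ∀ i, 3 ≤ rfun i)
    (hScard : ∀ i, (S i).card = rfun i)
    (hcS : ∀ i, c i ∉ S i)
    (hadj : ∀ i, ∀ v ∈ S i, G.Adj (c i) v)
    (hdisj : ∀ i j, i ≠ j → Disjoint (insert (c i) (S i)) (insert (c j) (S j))) :
    ∑ i, rfun i ≤ 3 * r ∧ p ≤ r := by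
  classical
  rcases Nat.eq_zero_or_pos p with rfl | hp
  · simp
  have hpair : Pairwise (Disjoint on fun i => insert (c i) (S i)) := hdisj
  have hinj : Injective c := hpair.injective_of_disjoint_insert
  obtain ⟨T, hFT, hTG, hT⟩ := hG.exists_isTree_le_of_le_of_isAcyclic (starForest_le hadj)
    (starForest_isAcyclic (hpair.notMem_of_disjoint_insert hcS) hpair.eq_of_mem_of_disjoint_insert)
  have : Nontrivial V := by
    obtain ⟨i₀⟩ : Nonempty (Fin p) := ⟨⟨0, hp⟩⟩
    obtain ⟨v, hv⟩ : (S i₀).Nonempty := card_pos.mp (by linarith [hScard i₀, hr3 i₀])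
    exact ⟨c i₀, v, fun h => hcS i₀ (h ▸ hv)⟩
  have hnumLeaves : #{v | T.degree v = 1} ≤ r := by
    rw [← ncard_subgraphLeaves_toSubgraph hTG]
    exact hleaves _ (isTree_coe_toSubgraph hTG hT)
  have hdeg (i : Fin p) : rfun i ≤ T.degree (c i) := by
    rw [← hScard, ← card_neighborFinset_eq_degree]
    exact card_le_card fun v hv =>
      (mem_neighborFinset _ _ _).mpr (hFT (starForest_adj_of_mem hv (hcS i)))
  have hcenters : ∑ i, rfun i ≤ ∑ v ∈ univ.image c, T.degree v := by
    rw [sum_image hinj.injOn]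
    exact sum_le_sum fun i _ => hdeg i
  have htree := hT.sum_degree_add_two_le (univ.image c)
  rw [card_image_of_injective _ hinj, card_univ, Fintype.card_fin] at htree
  have h3p : 3 * p ≤ ∑ i, rfun i := by
    simpa [mul_comm] using sum_le_sum fun i (_ : i ∈ univ) => hr3 i
  omega

/-- If a connected graph contains no subtree with more than `r` leaves, and it contains
a vertex-disjoint collection of stars `K_{1,r_i}` with each `r_i ≥ 3`, then
`∑ r_i ≤ 3r` and `p ≤ r`. -/
theorem star_packing_bound {V : Type*} [Fintype V] [DecidableEq V]
    (G : SimpleGraph V) (hG : G.Connected) (r : ℕ) (hr : 0 < r)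
    (hleaves : ∀ H : G.Subgraph, H.coe.IsTree → (subgraphLeaves H).ncard ≤ r)
    (p : ℕ) (rfun : Fin p → ℕ) (c : Fin p → V) (S : Fin p → Finset V)
    (hr3 : ∀ i, 3 ≤ rfun i)
    (hScard : ∀ i, (S i).card = rfun i)
    (hcS : ∀ i, c i ∉ S i)
    (hadj : ∀ i, ∀ v ∈ S i, G.Adj (c i) v)
    (hdisj : ∀ i j, i ≠ j → Disjoint (insert (c i) (S i)) (insert (c j) (S j))) :
    ∑ i, rfun i ≤ 3 * r ∧ p ≤ r :=
  star_packing_bound_general G hG r hleaves p rfun c S hr3 hScard hcS hadj hdisj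
end

section
/- Let A \in \{0,\pm 1\}^{m \times n} be the edge-vertex incidence matrix of a signed graph S = (V, E, \sigma), and let w: V \to \mathbb{Z} be a weight function on the vertices. Then for every subtree T of S, alt(T, w) := |\sum_{v \in A_T} w(v) - \sum_{v \in B_T} w(v)| is the absolute value of some subdeterminant of the matrix obtained by appending the row w^T to A. In particular alt(S, w) \le \Delta(\begin{pmatrix} A \\ w^T \end{pmatrix}), where \Delta(M) denotes the maximum absolute value of a subdeterminant of M. -/
open Finset

private lemma notmem_of_ne_univ {α : Type*} [Fintype α] {s : Finset α} (h : s ≠ Finset.univ) :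
    ∃ j, j ∉ s := by
  by_contra hc; push_neg at hc
  exact h (Finset.eq_univ_iff_forall.mpr hc)

private lemma walk_cross {α : Type*} {G : SimpleGraph α} {S : Set α} :
    ∀ {u v : α}, G.Walk u v → u ∈ S → v ∉ S →
    ∃ a b, G.Adj a b ∧ a ∈ S ∧ b ∉ S := by
  intro u v p
  induction p with
  | nil => intro h h'; exact absurd h h'
  | @cons u x v h p ih =>
    intro hu hv
    by_cases hx : x ∈ S
    · exact ih hx hv
    · exact ⟨u, x, h, hu, hx⟩

private lemma unimod : ∀ (q : ℕ) (C : Matrix (Fin q) (Fin (q+1)) ℤ),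
    (∀ e, ∃ u v, u ≠ v ∧ C e u = 1 ∧ C e v = -1 ∧ ∀ x, x ≠ u → x ≠ v → C e x = 0) →
    (∀ S : Finset (Fin (q+1)), S.Nonempty → S ≠ Finset.univ →
      ∃ e u v, u ∈ S ∧ v ∉ S ∧ C e u ≠ 0 ∧ C e v ≠ 0) →
    ∀ g : Fin q → Fin (q+1), Function.Injective g →
    IsUnit (C.submatrix id g).det := by
  intro q
  induction q with
  | zero =>
    intro C _ _ g _
    rw [Matrix.det_fin_zero]; exact isUnit_one
  | succ q IH =>
    intro C hrow hcut g hg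
    -- the missed column j0
    have hcardim : (Finset.univ.image g).card = q + 1 := by
      rw [Finset.card_image_of_injective _ hg, Finset.card_univ, Fintype.card_fin]
    obtain ⟨j0, hj0⟩ : ∃ j0, j0 ∉ Finset.univ.image g := by
      apply notmem_of_ne_univ
      intro h; rw [h, Finset.card_univ, Fintype.card_fin] at hcardim; omega
    have hj0' : ∀ i, g i ≠ j0 := fun i h => hj0 (h ▸ Finset.mem_image_of_mem g (Finset.mem_univ i))
    have hsurj : ∀ j, j ≠ j0 → ∃ i, g i = j := by
      intro j hj
      have hsub : Finset.univ.image g ⊆ Finset.univ.erase j0 := by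
        intro x hx
        obtain ⟨i, -, rfl⟩ := Finset.mem_image.mp hx
        exact Finset.mem_erase.mpr ⟨hj0' i, Finset.mem_univ _⟩
      have heq : Finset.univ.image g = Finset.univ.erase j0 :=
        Finset.eq_of_subset_of_card_le hsub (by
          rw [hcardim, Finset.card_erase_of_mem (Finset.mem_univ _), Finset.card_univ,
            Fintype.card_fin]
          omega)
      have hmem : j ∈ Finset.univ.image g := by
        rw [heq]; exact Finset.mem_erase.mpr ⟨hj, Finset.mem_univ _⟩
      obtain ⟨i, -, hi⟩ := Finset.mem_image.mp hmem
      exact ⟨i, hi⟩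
    -- degrees
    set deg : Fin (q+2) → ℕ := fun v => (Finset.univ.filter (fun e => C e v ≠ 0)).card with hdeg
    have hrowcard : ∀ e, (Finset.univ.filter (fun v => C e v ≠ 0)).card = 2 := by
      intro e
      obtain ⟨u, v, huv, hu, hv, hz⟩ := hrow e
      have hfe : Finset.univ.filter (fun x => C e x ≠ 0) = {u, v} := by
        ext x
        simp only [Finset.mem_filter, Finset.mem_univ, true_and, Finset.mem_insert,
          Finset.mem_singleton]
        constructor
        · intro hx
          by_contra hcon; push_neg at hcon
          exact hx (hz x hcon.1 hcon.2)
        · rintro (rfl | rfl)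
          · rw [hu]; exact one_ne_zero
          · rw [hv]; exact neg_ne_zero.mpr one_ne_zero
      rw [hfe, Finset.card_insert_of_notMem (by simpa using huv), Finset.card_singleton]
    have hsum : ∑ v, deg v = 2 * (q + 1) := by
      calc ∑ v, deg v = ∑ v : Fin (q+2), ∑ e : Fin (q+1), if C e v ≠ 0 then 1 else 0 := by
            simp [hdeg, Finset.card_filter]
        _ = ∑ e : Fin (q+1), ∑ v : Fin (q+2), if C e v ≠ 0 then 1 else 0 := Finset.sum_comm
        _ = ∑ e : Fin (q+1), (Finset.univ.filter (fun v => C e v ≠ 0)).card := by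
            simp [Finset.card_filter]
        _ = ∑ _e : Fin (q+1), 2 := Finset.sum_congr rfl (fun e _ => hrowcard e)
        _ = 2 * (q+1) := by simp [Finset.sum_const, Finset.card_univ, mul_comm]
    have hsingle_ne : ∀ x : Fin (q+2), ({x} : Finset (Fin (q+2))) ≠ Finset.univ := by
      intro x h
      have h1 : (1 : ℕ) = q + 2 := by
        rw [← Finset.card_singleton x, h, Finset.card_univ, Fintype.card_fin]
      omega
    have hdegpos : ∀ x : Fin (q+2), 1 ≤ deg x := by
      intro x
      obtain ⟨e, u, v, hu, hv, hcu, hcv⟩ := hcut {x} ⟨x, Finset.mem_singleton_self x⟩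
        (hsingle_ne x)
      rw [Finset.mem_singleton] at hu; subst hu
      exact Finset.card_pos.mpr ⟨e, Finset.mem_filter.mpr ⟨Finset.mem_univ _, hcu⟩⟩
    obtain ⟨j, hjne, hdegj⟩ : ∃ j, j ≠ j0 ∧ deg j ≤ 1 := by
      by_contra hcon; push_neg at hcon
      have hge : ∀ x ∈ Finset.univ.erase j0, 2 ≤ deg x := fun x hx =>
        hcon x (Finset.mem_erase.mp hx).1
      have h1 : (Finset.univ.erase j0).card • 2 ≤ ∑ x ∈ Finset.univ.erase j0, deg x :=
        Finset.card_nsmul_le_sum _ _ _ hge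
      have h2 : ∑ x ∈ Finset.univ.erase j0, deg x + deg j0 = 2 * (q + 1) := by
        rw [Finset.sum_erase_add Finset.univ _ (Finset.mem_univ j0), hsum]
      have h3 : (Finset.univ.erase j0).card = q + 1 := by
        rw [Finset.card_erase_of_mem (Finset.mem_univ _), Finset.card_univ, Fintype.card_fin]
        omega
      have h4 := hdegpos j0
      rw [h3] at h1
      simp only [smul_eq_mul] at h1
      omega
    have hdegj1 : deg j = 1 := le_antisymm hdegj (hdegpos j)
    obtain ⟨e0, he0⟩ := Finset.card_eq_one.mp hdegj1
    have he0j : C e0 j ≠ 0 := by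
      have hmem : e0 ∈ Finset.univ.filter (fun e => C e j ≠ 0) :=
        he0 ▸ Finset.mem_singleton_self e0
      exact (Finset.mem_filter.mp hmem).2
    have hleaf : ∀ e, e ≠ e0 → C e j = 0 := by
      intro e he
      by_contra hc
      have hmem : e ∈ ({e0} : Finset (Fin (q+1))) :=
        he0 ▸ Finset.mem_filter.mpr ⟨Finset.mem_univ _, hc⟩
      exact he (Finset.mem_singleton.mp hmem)
    obtain ⟨ij, hij⟩ := hsurj j hjne
    -- the two endpoints of e0
    obtain ⟨u0, v0, huv0, hu0, hv0, hz0⟩ := hrow e0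
    have hjuv : j = u0 ∨ j = v0 := by
      by_contra hc; push_neg at hc
      exact he0j (hz0 j hc.1 hc.2)
    obtain ⟨nb, hnbj, hnb0, hother⟩ :
        ∃ nb, nb ≠ j ∧ C e0 nb ≠ 0 ∧ ∀ x, C e0 x ≠ 0 → x = j ∨ x = nb := by
      rcases hjuv with h | h
      · refine ⟨v0, by intro hh; rw [h] at hh; exact huv0 hh.symm, by rw [hv0]; norm_num, ?_⟩
        intro x hx
        have hx2 : x = u0 ∨ x = v0 := by
          by_contra hc; push_neg at hc; exact hx (hz0 x hc.1 hc.2)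
        rcases hx2 with rfl | rfl
        · exact Or.inl h.symm
        · exact Or.inr rfl
      · refine ⟨u0, by intro hh; rw [h] at hh; exact huv0 hh, by rw [hu0]; norm_num, ?_⟩
        intro x hx
        have hx2 : x = u0 ∨ x = v0 := by
          by_contra hc; push_neg at hc; exact hx (hz0 x hc.1 hc.2)
        rcases hx2 with rfl | rfl
        · exact Or.inr rfl
        · exact Or.inl h.symm
    obtain ⟨nb', hnb'⟩ := Fin.exists_succAbove_eq hnbj
    -- permutations
    set σ : Equiv.Perm (Fin (q+1)) := Equiv.swap 0 e0 with hσ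
    set τ : Equiv.Perm (Fin (q+1)) := Equiv.swap 0 ij with hτ
    set D : Matrix (Fin (q+1)) (Fin (q+1)) ℤ := C.submatrix id g with hD
    have hσσ : ∀ x, σ (σ x) = x := fun x => Equiv.swap_apply_self 0 e0 x
    have hσ0 : σ 0 = e0 := Equiv.swap_apply_left 0 e0
    have hσe0 : σ e0 = 0 := Equiv.swap_apply_right 0 e0
    have hττ : ∀ x, τ (τ x) = x := fun x => Equiv.swap_apply_self 0 ij x
    have hτ0 : τ 0 = ij := Equiv.swap_apply_left 0 ij
    have hτij : τ ij = 0 := Equiv.swap_apply_right 0 ij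
    suffices hfin : IsUnit (D.submatrix (⇑σ) (⇑τ)).det by
      have h1 : D.submatrix (⇑σ) (⇑τ) = (D.submatrix id (⇑τ)).submatrix (⇑σ) id := rfl
      rw [h1, Matrix.det_permute, Matrix.det_permute'] at hfin
      exact (IsUnit.mul_iff.mp (IsUnit.mul_iff.mp hfin).2).2
    -- row embedding
    set ρ : Fin q → Fin (q+1) := fun i => σ i.succ with hρ
    have hρne : ∀ i, ρ i ≠ e0 := by
      intro i hh
      have h1 : σ (ρ i) = σ e0 := congrArg σ hh
      rw [hσe0] at h1
      exact Fin.succ_ne_zero i ((hσσ i.succ).symm.trans h1)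
    have hρsurj : ∀ e, e ≠ e0 → ∃ e', ρ e' = e := by
      intro e he
      have hσe : σ e ≠ 0 := by
        intro hh
        exact he (((hσσ e).symm.trans (congrArg σ hh)).trans hσ0)
      obtain ⟨y, hy⟩ := Fin.exists_succ_eq.mpr hσe
      refine ⟨y, ?_⟩
      show σ y.succ = e
      rw [hy]
      exact hσσ e
    -- smaller matrix
    set C' : Matrix (Fin q) (Fin (q+1)) ℤ := fun e' v' => C (ρ e') (j.succAbove v') with hC'
    have hrowC' : ∀ e', ∃ u v, u ≠ v ∧ C' e' u = 1 ∧ C' e' v = -1 ∧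
        ∀ x, x ≠ u → x ≠ v → C' e' x = 0 := by
      intro e'
      obtain ⟨u, v, huv, hu, hv, hz⟩ := hrow (ρ e')
      have hune : u ≠ j := by
        intro h; rw [h, hleaf _ (hρne e')] at hu; norm_num at hu
      have hvne : v ≠ j := by
        intro h; rw [h, hleaf _ (hρne e')] at hv; norm_num at hv
      obtain ⟨u', hu'⟩ := Fin.exists_succAbove_eq hune
      obtain ⟨v', hv'⟩ := Fin.exists_succAbove_eq hvne
      refine ⟨u', v', ?_, ?_, ?_, ?_⟩
      · intro h; apply huv; rw [← hu', ← hv', h]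
      · show C (ρ e') (j.succAbove u') = 1; rw [hu']; exact hu
      · show C (ρ e') (j.succAbove v') = -1; rw [hv']; exact hv
      · intro x hxu hxv
        show C (ρ e') (j.succAbove x) = 0
        apply hz
        · intro h; apply hxu; apply Fin.succAbove_right_injective (p := j); rw [h, hu']
        · intro h; apply hxv; apply Fin.succAbove_right_injective (p := j); rw [h, hv']
    have hcutC' : ∀ S' : Finset (Fin (q+1)), S'.Nonempty → S' ≠ Finset.univ →
        ∃ e u v, u ∈ S' ∧ v ∉ S' ∧ C' e u ≠ 0 ∧ C' e v ≠ 0 := by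
      intro S' hne hnu
      obtain ⟨w', hw'⟩ := notmem_of_ne_univ hnu
      by_cases hnbS : nb' ∈ S'
      · set S : Finset (Fin (q+2)) := S'.image (j.succAbove) ∪ {j} with hS
        have hjS : j ∈ S := Finset.mem_union_right _ (Finset.mem_singleton_self j)
        have hnbS' : nb ∈ S := Finset.mem_union_left _
          (Finset.mem_image.mpr ⟨nb', hnbS, hnb'⟩)
        have hSne : S.Nonempty := ⟨j, hjS⟩
        have hSnu : S ≠ Finset.univ := by
          intro h
          have hmem : j.succAbove w' ∈ S := h ▸ Finset.mem_univ _
          rcases Finset.mem_union.mp hmem with h1 | h1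
          · obtain ⟨a, ha, hae⟩ := Finset.mem_image.mp h1
            exact hw' ((Fin.succAbove_right_injective hae) ▸ ha)
          · exact Fin.succAbove_ne j w' (Finset.mem_singleton.mp h1)
        obtain ⟨e, u, v, hu, hv, hcu, hcv⟩ := hcut S hSne hSnu
        have hee0 : e ≠ e0 := by
          rintro rfl
          rcases hother v hcv with rfl | rfl
          · exact hv hjS
          · exact hv hnbS'
        obtain ⟨e', he'⟩ := hρsurj e hee0
        have huj : u ≠ j := fun hh => hcu (by rw [hh]; exact hleaf e hee0)
        have humem : u ∈ S'.image (j.succAbove) := by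
          rcases Finset.mem_union.mp hu with h1 | h1
          · exact h1
          · exact absurd (Finset.mem_singleton.mp h1) huj
        obtain ⟨u', hu'S, hu'⟩ := Finset.mem_image.mp humem
        have hvj : v ≠ j := fun hh => hv (hh ▸ hjS)
        obtain ⟨v'', hv''⟩ := Fin.exists_succAbove_eq hvj
        have hv''S : v'' ∉ S' := fun hc =>
          hv (Finset.mem_union_left _ (Finset.mem_image.mpr ⟨v'', hc, hv''⟩))
        refine ⟨e', u', v'', hu'S, hv''S, ?_, ?_⟩
        · show C (ρ e') (j.succAbove u') ≠ 0; rw [he', hu']; exact hcu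
        · show C (ρ e') (j.succAbove v'') ≠ 0; rw [he', hv'']; exact hcv
      · set S : Finset (Fin (q+2)) := S'.image (j.succAbove) with hS
        have hjS : j ∉ S := by
          intro h
          obtain ⟨a, -, ha⟩ := Finset.mem_image.mp h
          exact Fin.succAbove_ne j a ha
        have hnbS' : nb ∉ S := by
          intro h
          obtain ⟨a, haS, ha⟩ := Finset.mem_image.mp h
          rw [← hnb'] at ha
          exact hnbS ((Fin.succAbove_right_injective ha) ▸ haS)
        have hSne : S.Nonempty := hne.image _
        have hSnu : S ≠ Finset.univ := fun h => hjS (h ▸ Finset.mem_univ _)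
        obtain ⟨e, u, v, hu, hv, hcu, hcv⟩ := hcut S hSne hSnu
        have hee0 : e ≠ e0 := by
          rintro rfl
          rcases hother u hcu with rfl | rfl
          · exact hjS hu
          · exact hnbS' hu
        obtain ⟨e', he'⟩ := hρsurj e hee0
        obtain ⟨u', hu'S, hu'⟩ := Finset.mem_image.mp hu
        have hvj : v ≠ j := fun hh => hcv (by rw [hh]; exact hleaf e hee0)
        obtain ⟨v'', hv''⟩ := Fin.exists_succAbove_eq hvj
        have hv''S : v'' ∉ S' := fun hc => hv (Finset.mem_image.mpr ⟨v'', hc, hv''⟩)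
        refine ⟨e', u', v'', hu'S, hv''S, ?_, ?_⟩
        · show C (ρ e') (j.succAbove u') ≠ 0; rw [he', hu']; exact hcu
        · show C (ρ e') (j.succAbove v'') ≠ 0; rw [he', hv'']; exact hcv
    -- the new column selection
    have hgτ : ∀ j' : Fin q, g (τ j'.succ) ≠ j := by
      intro j' hh
      have h1 : τ j'.succ = ij := hg (hh.trans hij.symm)
      exact Fin.succ_ne_zero j' ((hττ j'.succ).symm.trans ((congrArg τ h1).trans hτij))
    choose g' hg' using fun j' => Fin.exists_succAbove_eq (hgτ j')
    have hg'inj : Function.Injective g' := by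
      intro a b hab
      have h1 : j.succAbove (g' a) = j.succAbove (g' b) := by rw [hab]
      rw [hg' a, hg' b] at h1
      exact Fin.succ_injective _ (τ.injective (hg h1))
    -- expansion
    set E : Matrix (Fin q) (Fin q) ℤ := (D.submatrix (⇑σ) (⇑τ)).submatrix Fin.succ Fin.succ
      with hEdef
    have hcol0 : ∀ i, i ≠ 0 → (D.submatrix (⇑σ) (⇑τ)) i 0 = 0 := by
      intro i hi
      show C (σ i) (g (τ 0)) = 0
      rw [hτ0, hij]
      apply hleaf
      intro h
      exact hi (((hσσ i).symm.trans ((congrArg σ h).trans hσe0)))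
    have hdet : (D.submatrix (⇑σ) (⇑τ)).det = C e0 j * E.det := by
      rw [Matrix.det_succ_column_zero]
      rw [Finset.sum_eq_single_of_mem 0 (Finset.mem_univ _)
        (fun i _ hi => by rw [hcol0 i hi]; ring)]
      have h00 : (D.submatrix (⇑σ) (⇑τ)) 0 0 = C e0 j := by
        show C (σ 0) (g (τ 0)) = C e0 j
        rw [hσ0, hτ0, hij]
      rw [h00, Fin.succAbove_zero]
      simp [hEdef]
    have hEeq : E = C'.submatrix id g' := by
      ext i jj
      show C (ρ i) (g (τ jj.succ)) = C (ρ i) (j.succAbove (g' jj))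
      rw [hg' jj]
    have hEunit : IsUnit E.det := by
      rw [hEeq]; exact IH C' hrowC' hcutC' g' hg'inj
    have hCe0j : IsUnit (C e0 j) := by
      rcases hjuv with h | h
      · rw [h, hu0]; exact isUnit_one
      · rw [h, hv0]; exact IsUnit.neg isUnit_one
    rw [hdet]
    exact hCe0j.mul hEunit

/-- The matrix `M = (A; wᵀ)` obtained by appending the weight row `w` to `A`,
with rows indexed by `Option (Fin m)` (`some e` = edge row, `none` = weight row). -/
def appendRow {m n : ℕ} (A : Matrix (Fin m) (Fin n) ℤ) (w : Fin n → ℤ) :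
    Matrix (Option (Fin m)) (Fin n) ℤ :=
  Matrix.of fun i j => i.elim (w j) (fun e => A e j)

/-- Let `A` be the edge-vertex incidence matrix of a signed graph and `w` an integer
weight function on the vertices. For any subtree (given by its edge set `Et` and the
sign-bipartition `At, Bt` of its vertex set), the alternating weight
`|∑_{v ∈ At} w(v) - ∑_{v ∈ Bt} w(v)|` is the absolute value of a subdeterminant of
`(A; wᵀ)`; in particular it is at most any uniform bound `Δ` on the subdeterminants. -/
theorem alt_le_subdeterminant {m n : ℕ}
    (A : Matrix (Fin m) (Fin n) ℤ) (w : Fin n → ℤ)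
    (hentries : ∀ e x, A e x = 0 ∨ A e x = 1 ∨ A e x = -1)
    (htworow : ∀ e, (Finset.univ.filter (fun x => A e x ≠ 0)).card = 2)
    (Et : Finset (Fin m)) (At Bt : Finset (Fin n)) (hdisj : Disjoint At Bt)
    -- each tree edge has its two endpoints in the tree, with the incidence sign
    -- convention `A_{e,u} A_{e,v} = -σ(e)`: even edges (`σ = +1`, product `-1`)
    -- stay within a part, odd edges (`σ = -1`, product `+1`) cross the parts:
    (hedge : ∀ e ∈ Et, ∃ u v : Fin n, u ≠ v ∧ u ∈ At ∪ Bt ∧ v ∈ At ∪ Bt ∧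
      A e u ≠ 0 ∧ A e v ≠ 0 ∧
      (A e u * A e v = -1 ↔ ((u ∈ At ∧ v ∈ At) ∨ (u ∈ Bt ∧ v ∈ Bt))))
    -- the subtree is a tree: one more vertex than edges, and connected
    (hcard : Et.card + 1 = (At ∪ Bt).card)
    (hconn : ∀ u v : Fin n, ∀ (hu : u ∈ (↑(At ∪ Bt) : Set (Fin n)))
      (hv : v ∈ (↑(At ∪ Bt) : Set (Fin n))),
      ((SimpleGraph.fromRel
        (fun a b => ∃ e ∈ Et, A e a ≠ 0 ∧ A e b ≠ 0)).induce
          (↑(At ∪ Bt) : Set (Fin n))).Reachable ⟨u, hu⟩ ⟨v, hv⟩) :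
    (∃ (k : ℕ) (rr : Fin k → Option (Fin m)) (cc : Fin k → Fin n),
      Function.Injective rr ∧ Function.Injective cc ∧
      |((appendRow A w).submatrix rr cc).det| =
        |∑ v ∈ At, w v - ∑ v ∈ Bt, w v|) ∧
    ∀ Δ : ℤ, (∀ (k : ℕ) (rr : Fin k → Option (Fin m)) (cc : Fin k → Fin n),
        Function.Injective rr → Function.Injective cc →
        |((appendRow A w).submatrix rr cc).det| ≤ Δ) →
      |∑ v ∈ At, w v - ∑ v ∈ Bt, w v| ≤ Δ := by
  classical
  set q := Et.card with hq
  have hvcard : (At ∪ Bt).card = q + 1 := by omega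
  set eIso := Et.orderIsoOfFin hq.symm with heIso
  set vIso := (At ∪ Bt).orderIsoOfFin hvcard with hvIso
  set cc : Fin (q+1) → Fin n := fun jj => ((vIso jj : {x // x ∈ At ∪ Bt}) : Fin n) with hcc
  set ed : Fin q → Fin m := fun i' => ((eIso i' : {x // x ∈ Et}) : Fin m) with hed
  set rr : Fin (q+1) → Option (Fin m) :=
    fun i => Fin.cases none (fun i' => some (ed i')) i with hrr
  have hccmem : ∀ jj, cc jj ∈ At ∪ Bt := fun jj => (vIso jj).2
  have hedmem : ∀ i', ed i' ∈ Et := fun i' => (eIso i').2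
  have hccinj : Function.Injective cc := by
    intro a b h
    exact vIso.injective (Subtype.ext h)
  have hedinj : Function.Injective ed := by
    intro a b h
    exact eIso.injective (Subtype.ext h)
  have hrr0 : rr 0 = none := rfl
  have hrrs : ∀ i' : Fin q, rr i'.succ = some (ed i') := fun i' => rfl
  have hrrinj : Function.Injective rr := by
    intro a b hab
    rcases Fin.eq_zero_or_eq_succ a with rfl | ⟨a', rfl⟩ <;>
      rcases Fin.eq_zero_or_eq_succ b with rfl | ⟨b', rfl⟩
    · rfl
    · rw [hrr0, hrrs] at hab; exact absurd hab (by simp)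
    · rw [hrr0, hrrs] at hab; exact absurd hab.symm (by simp)
    · rw [hrrs, hrrs] at hab
      rw [hedinj (Option.some.inj hab)]
  set s : Fin n → ℤ := fun v => if v ∈ At then 1 else -1 with hs
  have hs1 : ∀ v ∈ At, s v = 1 := fun v hv => if_pos hv
  have hsB : ∀ v ∈ Bt, s v = -1 := fun v hv => if_neg (Finset.disjoint_right.mp hdisj hv)
  have hsunit : ∀ v, s v = 1 ∨ s v = -1 := by
    intro v
    by_cases h : v ∈ At
    · left; exact if_pos h
    · right; exact if_neg h
  have hsne : ∀ v, s v ≠ 0 := by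
    intro v
    rcases hsunit v with h | h <;> rw [h] <;> norm_num
  set M0 : Matrix (Fin (q+1)) (Fin (q+1)) ℤ := (appendRow A w).submatrix rr cc with hM0
  set d : Fin (q+1) → ℤ := fun jj => s (cc jj) with hd
  set N : Matrix (Fin (q+1)) (Fin (q+1)) ℤ := M0 * Matrix.diagonal d with hN
  have hNe : ∀ i jj, N i jj = M0 i jj * d jj := fun i jj => Matrix.mul_diagonal d M0 i jj
  set C : Matrix (Fin q) (Fin (q+1)) ℤ := fun i' jj => N i'.succ jj with hC
  have hCe : ∀ (i' : Fin q) (jj : Fin (q+1)), C i' jj = A (ed i') (cc jj) * s (cc jj) := by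
    intro i' jj
    show N i'.succ jj = _
    rw [hNe]
    rfl
  have hN0 : ∀ jj, N 0 jj = w (cc jj) * s (cc jj) := by
    intro jj
    rw [hNe]
    rfl
  -- the nonzero entries of an edge row are exactly the two endpoints
  have hpairzero : ∀ e ∈ Et, ∀ u v : Fin n, u ≠ v → A e u ≠ 0 → A e v ≠ 0 →
      ∀ x, x ≠ u → x ≠ v → A e x = 0 := by
    intro e _ u v huv hAu hAv x hxu hxv
    have hsub : ({u, v} : Finset (Fin n)) ⊆ Finset.univ.filter (fun x => A e x ≠ 0) := by
      intro y hy
      rcases Finset.mem_insert.mp hy with rfl | hy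
      · exact Finset.mem_filter.mpr ⟨Finset.mem_univ _, hAu⟩
      · rw [Finset.mem_singleton.mp hy]
        exact Finset.mem_filter.mpr ⟨Finset.mem_univ _, hAv⟩
    have hcards : ({u, v} : Finset (Fin n)).card = 2 := by
      rw [Finset.card_insert_of_notMem (by simpa using huv), Finset.card_singleton]
    have heq : ({u, v} : Finset (Fin n)) = Finset.univ.filter (fun x => A e x ≠ 0) :=
      Finset.eq_of_subset_of_card_le hsub (by rw [htworow e, hcards])
    by_contra hcon
    have : x ∈ ({u, v} : Finset (Fin n)) := by
      rw [heq]; exact Finset.mem_filter.mpr ⟨Finset.mem_univ _, hcon⟩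
    rcases Finset.mem_insert.mp this with h | h
    · exact hxu h
    · exact hxv (Finset.mem_singleton.mp h)
  -- rows of C
  have hrowC : ∀ i', ∃ U V, U ≠ V ∧ C i' U = 1 ∧ C i' V = -1 ∧
      ∀ X, X ≠ U → X ≠ V → C i' X = 0 := by
    intro i'
    obtain ⟨u, v, huv, hu, hv, hAu, hAv, hiff⟩ := hedge (ed i') (hedmem i')
    have hAu1 : A (ed i') u = 1 ∨ A (ed i') u = -1 := (hentries (ed i') u).resolve_left hAu
    have hAv1 : A (ed i') v = 1 ∨ A (ed i') v = -1 := (hentries (ed i') v).resolve_left hAv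
    have hprodne : (A (ed i') u * s u) * (A (ed i') v * s v) = -1 := by
      have hkey : A (ed i') u * A (ed i') v = -1 → s u * s v = 1 := by
        intro h
        rcases hiff.mp h with ⟨h1, h2⟩ | ⟨h1, h2⟩
        · rw [hs1 u h1, hs1 v h2]; norm_num
        · rw [hsB u h1, hsB v h2]; norm_num
      have hkey2 : A (ed i') u * A (ed i') v = 1 → s u * s v = -1 := by
        intro h
        have hne : ¬((u ∈ At ∧ v ∈ At) ∨ (u ∈ Bt ∧ v ∈ Bt)) := by
          intro hcon
          rw [hiff.mpr hcon] at h
          norm_num at h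
        rcases Finset.mem_union.mp hu with hA1 | hB1
        · have hvB : v ∈ Bt := by
            rcases Finset.mem_union.mp hv with h2 | h2
            · exact absurd (Or.inl ⟨hA1, h2⟩) hne
            · exact h2
          rw [hs1 u hA1, hsB v hvB]; norm_num
        · have hvA : v ∈ At := by
            rcases Finset.mem_union.mp hv with h2 | h2
            · exact h2
            · exact absurd (Or.inr ⟨hB1, h2⟩) hne
          rw [hsB u hB1, hs1 v hvA]; norm_num
      have hprod : A (ed i') u * A (ed i') v = 1 ∨ A (ed i') u * A (ed i') v = -1 := by
        rcases hAu1 with h1 | h1 <;> rcases hAv1 with h2 | h2 <;> rw [h1, h2] <;> norm_num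
      have heq : (A (ed i') u * s u) * (A (ed i') v * s v)
          = (A (ed i') u * A (ed i') v) * (s u * s v) := by ring
      rw [heq]
      rcases hprod with h | h
      · rw [h, hkey2 h]; norm_num
      · rw [h, hkey h]; norm_num
    set x : ℤ := A (ed i') u * s u with hx
    set y : ℤ := A (ed i') v * s v with hy
    have hxval : x = 1 ∨ x = -1 := by
      rcases hAu1 with h1 | h1 <;> rcases hsunit u with h2 | h2 <;>
        rw [hx, h1, h2] <;> norm_num
    have hcases : (x = 1 ∧ y = -1) ∨ (x = -1 ∧ y = 1) := by
      rcases hxval with h1 | h1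
      · left; refine ⟨h1, ?_⟩; rw [h1, one_mul] at hprodne; exact hprodne
      · right; refine ⟨h1, ?_⟩
        rw [h1] at hprodne
        linarith
    set ju : Fin (q+1) := vIso.symm ⟨u, hu⟩ with hju
    set jv : Fin (q+1) := vIso.symm ⟨v, hv⟩ with hjv
    have hccju : cc ju = u := by
      rw [hcc, hju]; simp
    have hccjv : cc jv = v := by
      rw [hcc, hjv]; simp
    have hjune : ju ≠ jv := by
      intro h
      apply huv
      rw [← hccju, ← hccjv, h]
    have hCu : C i' ju = x := by rw [hCe, hccju]
    have hCv : C i' jv = y := by rw [hCe, hccjv]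
    have hzero : ∀ X, X ≠ ju → X ≠ jv → C i' X = 0 := by
      intro X h1 h2
      rw [hCe]
      have hccX1 : cc X ≠ u := fun h => h1 (hccinj (by rw [h, hccju]))
      have hccX2 : cc X ≠ v := fun h => h2 (hccinj (by rw [h, hccjv]))
      rw [hpairzero (ed i') (hedmem i') u v huv hAu hAv (cc X) hccX1 hccX2, zero_mul]
    rcases hcases with ⟨h1, h2⟩ | ⟨h1, h2⟩
    · exact ⟨ju, jv, hjune, by rw [hCu, h1], by rw [hCv, h2], hzero⟩
    · refine ⟨jv, ju, hjune.symm, by rw [hCv, h2], by rw [hCu, h1], ?_⟩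
      intro X hX1 hX2
      exact hzero X hX2 hX1
  -- cut condition for C
  have hcutC : ∀ S : Finset (Fin (q+1)), S.Nonempty → S ≠ Finset.univ →
      ∃ i' U V, U ∈ S ∧ V ∉ S ∧ C i' U ≠ 0 ∧ C i' V ≠ 0 := by
    intro S hSne hSnu
    obtain ⟨a0, ha0⟩ := hSne
    obtain ⟨b0, hb0⟩ := notmem_of_ne_univ hSnu
    set Sv : Set (↑(At ∪ Bt) : Set (Fin n)) := {z | ∃ jj ∈ S, cc jj = ↑z} with hSv
    have hr := hconn (cc a0) (cc b0) (Finset.mem_coe.mpr (hccmem a0))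
      (Finset.mem_coe.mpr (hccmem b0))
    obtain ⟨p⟩ := hr
    have hain : (⟨cc a0, Finset.mem_coe.mpr (hccmem a0)⟩ :
        (↑(At ∪ Bt) : Set (Fin n))) ∈ Sv := ⟨a0, ha0, rfl⟩
    have hbnot : (⟨cc b0, Finset.mem_coe.mpr (hccmem b0)⟩ :
        (↑(At ∪ Bt) : Set (Fin n))) ∉ Sv := by
      rintro ⟨jj, hjj, hjj2⟩
      have : jj = b0 := hccinj hjj2
      exact hb0 (this ▸ hjj)
    obtain ⟨z1, z2, hadj, hz1S, hz2S⟩ := walk_cross p hain hbnot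
    have hadj' : ∃ e ∈ Et, A e (↑z1) ≠ 0 ∧ A e (↑z2) ≠ 0 := by
      rw [SimpleGraph.comap_adj] at hadj
      rw [SimpleGraph.fromRel_adj] at hadj
      obtain ⟨-, hrel⟩ := hadj
      rcases hrel with ⟨e, he, h1, h2⟩ | ⟨e, he, h1, h2⟩
      · exact ⟨e, he, h1, h2⟩
      · exact ⟨e, he, h2, h1⟩
    obtain ⟨e, he, hz10, hz20⟩ := hadj'
    set i' : Fin q := eIso.symm ⟨e, he⟩ with hi'
    have hedi' : ed i' = e := by rw [hed, hi']; simp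
    have hz1m : (z1 : Fin n) ∈ At ∪ Bt := Finset.mem_coe.mp z1.2
    have hz2m : (z2 : Fin n) ∈ At ∪ Bt := Finset.mem_coe.mp z2.2
    set jx : Fin (q+1) := vIso.symm ⟨(z1 : Fin n), hz1m⟩ with hjx
    set jy : Fin (q+1) := vIso.symm ⟨(z2 : Fin n), hz2m⟩ with hjy
    have hccjx : cc jx = (z1 : Fin n) := by rw [hcc, hjx]; simp
    have hccjy : cc jy = (z2 : Fin n) := by rw [hcc, hjy]; simp
    have hjxS : jx ∈ S := by
      obtain ⟨jj, hjjS, hjj2⟩ := hz1S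
      have : jj = jx := hccinj (by rw [hjj2, hccjx])
      exact this ▸ hjjS
    have hjyS : jy ∉ S := by
      intro h
      exact hz2S ⟨jy, h, by rw [hccjy]⟩
    refine ⟨i', jx, jy, hjxS, hjyS, ?_, ?_⟩
    · rw [hCe, hccjx, hedi']
      exact mul_ne_zero hz10 (hsne _)
    · rw [hCe, hccjy, hedi']
      exact mul_ne_zero hz20 (hsne _)
  -- determinant computations
  have hdetN : N.det = M0.det * ∏ jj, d jj := by
    rw [hN, Matrix.det_mul, Matrix.det_diagonal]
  have habsd : |∏ jj, d jj| = 1 := by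
    rw [Finset.abs_prod]
    apply Finset.prod_eq_one
    intro jj _
    rcases hsunit (cc jj) with h | h <;> · show |s (cc jj)| = 1; rw [h]; norm_num
  have hrowsum : ∀ i' : Fin q, ∑ jj, C i' jj = 0 := by
    intro i'
    obtain ⟨U, V, hUV, hU, hV, hz⟩ := hrowC i'
    have h1 : ∑ jj ∈ ({U, V} : Finset (Fin (q+1))), C i' jj = 0 := by
      rw [Finset.sum_pair hUV, hU, hV]; ring
    rw [← Finset.sum_subset (Finset.subset_univ {U, V})
      (fun x _ hx => hz x (fun hh => hx (by rw [hh]; simp)) (fun hh => hx (by rw [hh]; simp)))]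
    exact h1
  have hwsum : ∑ jj, N 0 jj = ∑ v ∈ At, w v - ∑ v ∈ Bt, w v := by
    have h1 : ∑ jj, N 0 jj = ∑ jj : Fin (q+1), w (cc jj) * s (cc jj) :=
      Finset.sum_congr rfl fun jj _ => hN0 jj
    have h2 : ∑ jj : Fin (q+1), w (cc jj) * s (cc jj)
        = ∑ z : {x // x ∈ At ∪ Bt}, w (↑z) * s (↑z) :=
      Equiv.sum_comp vIso.toEquiv (fun z => w (↑z) * s (↑z))
    have h3 : ∑ z : {x // x ∈ At ∪ Bt}, w (↑z) * s (↑z) = ∑ v ∈ At ∪ Bt, w v * s v :=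
      Finset.sum_coe_sort (At ∪ Bt) (fun v => w v * s v)
    have h4 : ∑ v ∈ At ∪ Bt, w v * s v = ∑ v ∈ At, w v - ∑ v ∈ Bt, w v := by
      rw [Finset.sum_union hdisj]
      have hA : ∑ v ∈ At, w v * s v = ∑ v ∈ At, w v :=
        Finset.sum_congr rfl fun v hv => by rw [hs1 v hv, mul_one]
      have hB : ∑ v ∈ Bt, w v * s v = -∑ v ∈ Bt, w v := by
        rw [← Finset.sum_neg_distrib]
        exact Finset.sum_congr rfl fun v hv => by rw [hsB v hv]; ring
      rw [hA, hB]; ring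
    rw [h1, h2, h3, h4]
  set t : Fin (q+1) → ℤ := fun i => ∑ jj, N i jj with ht
  have ht0 : t 0 = ∑ v ∈ At, w v - ∑ v ∈ Bt, w v := hwsum
  have hts : ∀ i : Fin (q+1), i ≠ 0 → t i = 0 := by
    intro i hi
    obtain ⟨i', hi'⟩ := Fin.exists_succ_eq.mpr hi
    rw [← hi']
    exact hrowsum i'
  have hupd : (N.updateCol 0 t).det = N.det := by
    have h1 := Matrix.det_updateCol_sum N 0 (fun _ => (1 : ℤ))
    simp only [one_smul, smul_eq_mul, one_mul] at h1
    exact h1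
  have hdetN' : (N.updateCol 0 t).det
      = t 0 * ((N.updateCol 0 t).submatrix Fin.succ Fin.succ).det := by
    rw [Matrix.det_succ_column_zero]
    rw [Finset.sum_eq_single_of_mem 0 (Finset.mem_univ _) (fun i _ hi => by
      rw [Matrix.updateCol_self, hts i hi]; ring)]
    rw [Matrix.updateCol_self, Fin.succAbove_zero]
    simp
  have hminor : (N.updateCol 0 t).submatrix Fin.succ Fin.succ
      = C.submatrix id Fin.succ := by
    ext i jj
    show (N.updateCol 0 t) i.succ jj.succ = C i jj.succ
    rw [Matrix.updateCol_ne (Fin.succ_ne_zero jj)]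
  have hunit : IsUnit (C.submatrix id Fin.succ).det :=
    unimod q C hrowC hcutC Fin.succ (Fin.succ_injective q)
  have habsunit : |(C.submatrix id Fin.succ).det| = 1 := by
    rcases Int.isUnit_iff.mp hunit with h | h <;> rw [h] <;> norm_num
  have hmain : |((appendRow A w).submatrix rr cc).det| = |∑ v ∈ At, w v - ∑ v ∈ Bt, w v| := by
    have e1 : N.det = (∑ v ∈ At, w v - ∑ v ∈ Bt, w v) * (C.submatrix id Fin.succ).det := by
      rw [← hupd, hdetN', hminor, ht0]
    have e2 : |N.det| = |∑ v ∈ At, w v - ∑ v ∈ Bt, w v| := by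
      rw [e1, abs_mul, habsunit, mul_one]
    have e3 : |N.det| = |M0.det| := by
      rw [hdetN, abs_mul, habsd, mul_one]
    exact e3.symm.trans e2
  refine ⟨⟨q + 1, rr, cc, hrrinj, hccinj, hmain⟩, ?_⟩
  intro Δ hΔ
  have h := hΔ (q + 1) rr cc hrrinj hccinj
  rwa [hmain] at h
end

section
/- Induction step for the alternating-weight determinant identity: Let T be a tree with t \ge 2 vertices in a signed graph with incidence matrix conventions as above, let M be the (t \times t) submatrix with rows indexed by E(T) and the weight row w, and columns indexed by V(T). Let v_1 be a leaf of T with incident edge e = v_1 v_2. Define T' := T - v_1 and w'(v_2) := w(v_2) + \sigma(e) w(v_1), w'(v) := w(v) otherwise, and let M' be the corresponding (t-1) \times (t-1) matrix for T' and w'. Then |det(M)| = |det(M')|. -/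
/-!
Adding `-(A e v₁) w(v₁)` times the row of `e` to the weight row leaves the determinant unchanged,
turns the weight row into `w'` off the column of `v₁`, and clears its entry in that column. The
column of `v₁` is then zero except for the entry `±1` in the row of `e`, so Laplace expansion
along it gives `det M = ± det M'`.
-/

/-- The square matrix `M` for a tree with `k+1` edges and `k+2` vertices: the first
`k+1` rows are the incidence rows `A`, the last row is the weight row `w`. -/
def treeMatrix {k : ℕ} (A : Matrix (Fin (k + 1)) (Fin (k + 2)) ℤ)
    (w : Fin (k + 2) → ℤ) : Matrix (Fin (k + 2)) (Fin (k + 2)) ℤ :=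
  Matrix.of fun i j => if h : (i : ℕ) < k + 1 then A ⟨i, h⟩ j else w j

/-- The reduced matrix `M'` obtained by deleting the row of edge `e` and the column of
the leaf `v₁`, and replacing the weight row by `w'`. -/
def reducedTreeMatrix {k : ℕ} (A : Matrix (Fin (k + 1)) (Fin (k + 2)) ℤ)
    (w' : Fin (k + 2) → ℤ) (e : Fin (k + 1)) (v1 : Fin (k + 2)) :
    Matrix (Fin (k + 1)) (Fin (k + 1)) ℤ :=
  Matrix.of fun i j =>
    if h : (i : ℕ) < k then A (e.succAbove ⟨i, h⟩) (v1.succAbove j)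
    else w' (v1.succAbove j)

open Matrix

theorem Matrix.det_succ_column_of_eq_zero {R : Type*} [CommRing R] {n : ℕ}
    (M : Matrix (Fin (n + 1)) (Fin (n + 1)) R) {i j : Fin (n + 1)}
    (hcol : ∀ i', i' ≠ i → M i' j = 0) :
    M.det = (-1) ^ (i + j : ℕ) * M i j * (M.submatrix i.succAbove j.succAbove).det := by
  rw [det_succ_column M j, Finset.sum_eq_single i]
  · intro i' _ hi'
    rw [hcol i' hi', mul_zero, zero_mul]
  · intro hi
    exact absurd (Finset.mem_univ i) hi

section TreeMatrix

variable {k : ℕ} (A : Matrix (Fin (k + 1)) (Fin (k + 2)) ℤ)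

@[simp]
theorem treeMatrix_castSucc (w : Fin (k + 2) → ℤ) (i : Fin (k + 1)) :
    treeMatrix A w i.castSucc = A i := by
  ext j
  simp only [treeMatrix, of_apply, Fin.val_castSucc, dif_pos i.isLt]

@[simp]
theorem treeMatrix_last (w : Fin (k + 2) → ℤ) : treeMatrix A w (Fin.last (k + 1)) = w := by
  ext j
  simp [treeMatrix]

@[simp]
theorem reducedTreeMatrix_castSucc (w' : Fin (k + 2) → ℤ) (e : Fin (k + 1)) (v1 : Fin (k + 2))
    (i : Fin k) :
    reducedTreeMatrix A w' e v1 i.castSucc = fun j => A (e.succAbove i) (v1.succAbove j) := by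
  ext j
  simp [reducedTreeMatrix]

@[simp]
theorem reducedTreeMatrix_last (w' : Fin (k + 2) → ℤ) (e : Fin (k + 1)) (v1 : Fin (k + 2)) :
    reducedTreeMatrix A w' e v1 (Fin.last k) = fun j => w' (v1.succAbove j) := by
  ext j
  simp [reducedTreeMatrix]

theorem reducedTreeMatrix_congr_weight {w₁ w₂ : Fin (k + 2) → ℤ} (e : Fin (k + 1))
    {v1 : Fin (k + 2)} (h : ∀ x, x ≠ v1 → w₁ x = w₂ x) :
    reducedTreeMatrix A w₁ e v1 = reducedTreeMatrix A w₂ e v1 := by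
  ext i j
  simp [reducedTreeMatrix, h _ (Fin.succAbove_ne v1 j)]

theorem treeMatrix_submatrix_succAbove (w : Fin (k + 2) → ℤ) (e : Fin (k + 1))
    (v1 : Fin (k + 2)) :
    (treeMatrix A w).submatrix e.castSucc.succAbove v1.succAbove =
      reducedTreeMatrix A w e v1 := by
  ext i j
  induction i using Fin.lastCases with
  | last => simp [Fin.succAbove_ne_last_last (Fin.castSucc_lt_last e).ne]
  | cast i => simp

theorem det_treeMatrix_add_smul_row (w : Fin (k + 2) → ℤ) (c : ℤ) (e : Fin (k + 1)) :
    (treeMatrix A (w + c • A e)).det = (treeMatrix A w).det := by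
  have hrow : treeMatrix A (w + c • A e) = (treeMatrix A w).updateRow (Fin.last (k + 1))
      (treeMatrix A w (Fin.last (k + 1)) + c • treeMatrix A w e.castSucc) := by
    ext i j
    induction i using Fin.lastCases with
    | last => simp
    | cast i => simp
  rw [hrow, det_updateRow_add_smul_self _ (Fin.castSucc_lt_last e).ne']

theorem det_treeMatrix_of_leaf (w : Fin (k + 2) → ℤ) (e : Fin (k + 1)) (v1 : Fin (k + 2))
    (hleaf : ∀ f, f ≠ e → A f v1 = 0) (hw : w v1 = 0) :
    (treeMatrix A w).det = (-1) ^ (e + v1 : ℕ) * A e v1 * (reducedTreeMatrix A w e v1).det := by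
  rw [det_succ_column_of_eq_zero _ (i := e.castSucc) (j := v1), treeMatrix_castSucc,
    treeMatrix_submatrix_succAbove, Fin.val_castSucc]
  intro i hi
  induction i using Fin.lastCases with
  | last => simpa using hw
  | cast f => simpa using hleaf f (fun h => hi (h ▸ rfl))

end TreeMatrix

theorem leaf_deletion_det_general {k : ℕ}
    (A : Matrix (Fin (k + 1)) (Fin (k + 2)) ℤ) (w : Fin (k + 2) → ℤ)
    (e : Fin (k + 1)) (v1 v2 : Fin (k + 2)) (σe : ℤ)
    (hv1 : A e v1 = 1 ∨ A e v1 = -1)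
    (hσ : A e v1 * A e v2 = -σe)
    (hrow : ∀ x, x ≠ v1 → x ≠ v2 → A e x = 0)
    (hleaf : ∀ f, f ≠ e → A f v1 = 0) :
    ((treeMatrix A w).det).natAbs =
      ((reducedTreeMatrix A
        (fun x => if x = v2 then w v2 + σe * w v1 else w x) e v1).det).natAbs := by
  have hunit : IsUnit (A e v1) := Int.isUnit_iff.mpr hv1
  set w' := w + (-(A e v1 * w v1)) • A e
  have hw'_leaf : w' v1 = 0 := by
    simp only [w', Pi.add_apply, Pi.smul_apply, smul_eq_mul]
    linear_combination (-w v1) * Int.isUnit_mul_self hunit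
  have hw'_eq : ∀ x, x ≠ v1 → w' x = if x = v2 then w v2 + σe * w v1 else w x := by
    intro x hx
    by_cases hx2 : x = v2
    · subst hx2
      simp only [w', if_pos, Pi.add_apply, Pi.smul_apply, smul_eq_mul]
      linear_combination (-w v1) * hσ
    · simp [w', hx2, hrow x hx hx2]
  rw [← det_treeMatrix_add_smul_row A w (-(A e v1 * w v1)) e,
    det_treeMatrix_of_leaf A w' e v1 hleaf hw'_leaf,
    reducedTreeMatrix_congr_weight A e hw'_eq]
  simp [Int.natAbs_mul, Int.isUnit_iff_natAbs_eq.mp hunit]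

/-- Induction step for the alternating-weight determinant identity: deleting a leaf
`v₁` with incident edge `e = v₁v₂` and folding its weight into `v₂` via
`w'(v₂) = w(v₂) + σ(e) w(v₁)` preserves the determinant up to sign. -/
theorem leaf_deletion_det {k : ℕ}
    (A : Matrix (Fin (k + 1)) (Fin (k + 2)) ℤ) (w : Fin (k + 2) → ℤ)
    (e : Fin (k + 1)) (v1 v2 : Fin (k + 2)) (hne : v1 ≠ v2) (σe : ℤ)
    (hv1 : A e v1 = 1 ∨ A e v1 = -1)
    (hv2 : A e v2 = 1 ∨ A e v2 = -1)
    (hσ : A e v1 * A e v2 = -σe)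
    (hrow : ∀ x, x ≠ v1 → x ≠ v2 → A e x = 0)
    (hleaf : ∀ f, f ≠ e → A f v1 = 0) :
    ((treeMatrix A w).det).natAbs =
      ((reducedTreeMatrix A
        (fun x => if x = v2 then w v2 + σe * w v1 else w x) e v1).det).natAbs :=
  leaf_deletion_det_general A w e v1 v2 σe hv1 hσ hrow hleaf
end

section
/- Let S = (V, E, \sigma) be a signed graph, k, r \in \mathbb{N}, and w_1, ..., w_k: V \to \mathbb{Z} weight functions. Let R := \{v \in V : \exists i, w_i(v) \ne 0\}. If the underlying graph G contains a subtree T that has at least r leaves belonging to R, then there exists i \in [k] such that alt(S, w_i) \ge r / (2k). -/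
/-! By pigeonhole some `wᵢ` is nonzero on at least `r / k` of the decorated leaves. A signed
tree is balanced: `σ(uv) = ε(u) ε(v)` for a sign function `ε`, so the alternating weight of a
subtree is `|∑ ε wᵢ|` over its vertices. Deleting the leaves with `ε wᵢ < 0`, resp. those with
`ε wᵢ > 0`, leaves two subtrees whose signed sums differ by `∑ |ε wᵢ|` over these leaves (the
rest of the tree contributes to both), which is at least their number; so one of the two sums
is at least half of it in absolute value. -/

open Finset

namespace SimpleGraph

lemma IsTree.exists_isUnit_sign {α : Type*} {H : SimpleGraph α} (hH : H.IsTree)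
    (σ : Sym2 α → ℤ) (hσ : ∀ e ∈ H.edgeSet, IsUnit (σ e)) :
    ∃ ε : α → ℤ, (∀ v, IsUnit (ε v)) ∧ ∀ u v, H.Adj u v → σ s(u, v) = ε u * ε v := by
  obtain ⟨ρ⟩ := hH.connected.nonempty
  choose p hp using hH.connected.preconnected.exists_isPath ρ
  set ε : α → ℤ := fun v => ((p v).edges.map σ).prod
  have hε : ∀ v, IsUnit (ε v) := fun v => List.prod_isUnit <| by
    simp only [List.mem_map]
    rintro _ ⟨e, he, rfl⟩
    exact hσ e ((p v).edges_subset_edgeSet he)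
  have hε_concat : ∀ u v (huv : H.Adj u v), p v = (p u).concat huv → ε v = ε u * σ s(u, v) :=
    fun u v huv h => by simp [ε, h, Walk.edges_concat]
  refine ⟨ε, hε, fun u v huv => ?_⟩
  by_cases hu : u ∈ (p v).support
  · rw [hε_concat u v huv (hH.isAcyclic.path_concat (hp u) (hp v) huv hu), ← mul_assoc,
      Int.isUnit_mul_self (hε u), one_mul]
  · have hv := hH.isAcyclic.mem_support_of_ne_mem_support_of_adj_of_isPath (hp u) (hp v) huv hu
    rw [hε_concat v u huv.symm (hH.isAcyclic.path_concat (hp v) (hp u) huv.symm hv),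
      Sym2.eq_swap, mul_comm (ε v), mul_assoc, Int.isUnit_mul_self (hε v), mul_one]

namespace Subgraph

variable {V : Type*} {G : SimpleGraph V}

lemma exists_isUnit_sign_of_isTree {T : G.Subgraph} (hT : T.coe.IsTree) (σ : Sym2 V → ℤ)
    (hσ : ∀ e ∈ T.edgeSet, IsUnit (σ e)) :
    ∃ ε : V → ℤ, (∀ v, IsUnit (ε v)) ∧ ∀ u v, T.Adj u v → σ s(u, v) = ε u * ε v := by
  classical
  obtain ⟨ε, hε, hεσ⟩ := hT.exists_isUnit_sign (fun e => σ (e.map (↑))) fun e he => by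
    induction e with
    | h a b => exact hσ _ he
  refine ⟨fun v => if hv : v ∈ T.verts then ε ⟨v, hv⟩ else 1,
    fun v => by dsimp only; split_ifs <;> simp [hε], fun u v huv => ?_⟩
  simpa [T.edge_vert huv, T.edge_vert huv.symm] using hεσ ⟨u, _⟩ ⟨v, _⟩ huv

lemma isTree_coe_deleteVerts {T : G.Subgraph} (hT : T.coe.IsTree) {X : Set V}
    (hX : ∀ v ∈ X, (T.neighborSet v).Subsingleton) (hne : (T.verts \ X).Nonempty) :
    (T.deleteVerts X).coe.IsTree := by
  rw [(coeDeleteVertsIso (G' := T) X).isTree_iff]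
  refine ⟨(connected_iff _).2 ⟨?_, ?_⟩, hT.isAcyclic.induce _⟩
  · refine hT.connected.preconnected.induce_of_degree_eq_one fun v hv a ha b hb => ?_
    exact Subtype.ext (hX v (not_not.1 hv) ha hb)
  · obtain ⟨v, hvT, hvX⟩ := hne
    exact ⟨⟨⟨v, hvT⟩, hvX⟩⟩

lemma exists_subtree_abs_sum_sdiff_le [DecidableEq V] {T : G.Subgraph} (hT : T.coe.IsTree)
    {W : Finset V} (hW : (W : Set V) = T.verts) {X : Finset V}
    (hX : ∀ v ∈ X, (T.neighborSet v).Subsingleton) (g : V → ℤ) :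
    ∃ T' ≤ T, T'.coe.IsTree ∧ ∃ U : Finset V, (U : Set V) = T'.verts ∧
      |∑ v ∈ W \ X, g v| ≤ |∑ v ∈ U, g v| := by
  by_cases hne : (W \ X).Nonempty
  · refine ⟨T.deleteVerts X, deleteVerts_le, isTree_coe_deleteVerts hT hX ?_, W \ X, ?_, le_rfl⟩
    · rwa [← hW, ← coe_sdiff, coe_nonempty]
    · rw [coe_sdiff, hW, deleteVerts_verts]
  · rw [not_nonempty_iff_eq_empty.1 hne, sum_empty, abs_zero]
    exact ⟨T, le_rfl, hT, W, hW, abs_nonneg _⟩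

lemma exists_subtree_card_le_two_mul_abs_sum [Finite V] {T : G.Subgraph} (hT : T.coe.IsTree)
    (g : V → ℤ) (F : Finset V)
    (hF : ∀ v ∈ F, v ∈ T.verts ∧ (T.neighborSet v).Subsingleton ∧ g v ≠ 0) :
    ∃ T' ≤ T, T'.coe.IsTree ∧ ∃ U : Finset V, (U : Set V) = T'.verts ∧
      (#F : ℤ) ≤ 2 * |∑ v ∈ U, g v| := by
  classical
  set W := T.verts.toFinite.toFinset
  have hW : (W : Set V) = T.verts := Set.Finite.coe_toFinset _
  have hFW : F ⊆ W := fun v hv => by simpa [W] using (hF v hv).1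
  set P := F.filter (0 < g ·)
  set N := F.filter (¬ 0 < g ·)
  have hleaf : ∀ Y ⊆ F, ∀ v ∈ Y, (T.neighborSet v).Subsingleton :=
    fun Y hY v hv => (hF v (hY hv)).2.1
  obtain ⟨T₁, hT₁, hT₁tree, U₁, hU₁, h₁⟩ :=
    exists_subtree_abs_sum_sdiff_le hT hW (hleaf N (filter_subset _ _)) g
  obtain ⟨T₂, hT₂, hT₂tree, U₂, hU₂, h₂⟩ :=
    exists_subtree_abs_sum_sdiff_le hT hW (hleaf P (filter_subset _ _)) g
  have hcard : (#F : ℤ) ≤ ∑ v ∈ P, g v - ∑ v ∈ N, g v :=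
    calc (#F : ℤ) = ∑ v ∈ F, 1 := by simp
      _ ≤ ∑ v ∈ F, |g v| := sum_le_sum fun v hv => Int.one_le_abs (hF v hv).2.2
      _ = ∑ v ∈ P, |g v| + ∑ v ∈ N, |g v| := (sum_filter_add_sum_filter_not _ _ _).symm
      _ = ∑ v ∈ P, g v - ∑ v ∈ N, g v := by
        rw [sub_eq_add_neg, ← sum_neg_distrib]
        congr 1 <;> refine sum_congr rfl fun v hv => ?_
        · exact abs_of_pos (mem_filter.1 hv).2
        · exact abs_of_nonpos (not_lt.1 (mem_filter.1 hv).2)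
  have hsplit : ∑ v ∈ W \ N, g v - ∑ v ∈ W \ P, g v = ∑ v ∈ P, g v - ∑ v ∈ N, g v := by
    rw [sum_sdiff_eq_sub ((filter_subset _ _).trans hFW),
      sum_sdiff_eq_sub ((filter_subset _ _).trans hFW)]
    ring
  have hsum : (#F : ℤ) ≤ |∑ v ∈ U₁, g v| + |∑ v ∈ U₂, g v| := by
    have := abs_sub (∑ v ∈ W \ N, g v) (∑ v ∈ W \ P, g v)
    have := le_abs_self (∑ v ∈ W \ N, g v - ∑ v ∈ W \ P, g v)
    linarith
  rcases le_total |∑ v ∈ U₂, g v| |∑ v ∈ U₁, g v| with h | h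
  · exact ⟨T₁, hT₁, hT₁tree, U₁, hU₁, by linarith⟩
  · exact ⟨T₂, hT₂, hT₂tree, U₂, hU₂, by linarith⟩

lemma exists_bipartition_of_sign (σ : Sym2 V → ℤ) {T : G.Subgraph} {U : Finset V}
    (hU : (U : Set V) = T.verts) {ε : V → ℤ} (hε : ∀ v, IsUnit (ε v))
    (hσ : ∀ u v, T.Adj u v → σ s(u, v) = ε u * ε v) (f : V → ℤ) :
    ∃ A B : Finset V, Disjoint A B ∧ (↑A ∪ ↑B : Set V) = T.verts ∧
      (∀ u v, T.Adj u v → (σ s(u, v) = 1 ↔ (u ∈ A ↔ v ∈ A))) ∧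
      ∑ v ∈ A, f v - ∑ v ∈ B, f v = ∑ v ∈ U, ε v * f v := by
  refine ⟨U.filter (ε · = 1), U.filter (¬ ε · = 1), disjoint_filter_filter_not _ _ _,
    ?_, fun u v huv => ?_, ?_⟩
  · ext v
    simp only [← hU, Set.mem_union, mem_coe, mem_filter]
    tauto
  · have hu : u ∈ U := by simpa [← hU] using T.edge_vert huv
    have hv : v ∈ U := by simpa [← hU] using T.edge_vert huv.symm
    rcases Int.isUnit_iff.1 (hε u) with h | h <;> rcases Int.isUnit_iff.1 (hε v) with h' | h' <;>
      simp [hσ u v huv, hu, hv, h, h']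
  · rw [← sum_filter_add_sum_filter_not U (ε · = 1), sub_eq_add_neg, ← sum_neg_distrib]
    congr 1 <;> refine sum_congr rfl fun v hv => ?_
    · rw [(mem_filter.1 hv).2, one_mul]
    · rw [(Int.isUnit_iff.1 (hε v)).resolve_left (mem_filter.1 hv).2, neg_one_mul]

end Subgraph

end SimpleGraph

lemma Finset.exists_card_le_mul_card_of_subset_biUnion {ι α : Type*} [Fintype ι] [Nonempty ι]
    [DecidableEq α] {s : Finset α} {t : ι → Finset α} (h : s ⊆ univ.biUnion t) :
    ∃ i, #s ≤ Fintype.card ι * #(t i) := by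
  have : ∑ _i : ι, #s ≤ ∑ i, Fintype.card ι * #(t i) := by
    rw [sum_const, ← mul_sum, card_univ, smul_eq_mul]
    exact Nat.mul_le_mul_left _ ((card_le_card h).trans card_biUnion_le)
  obtain ⟨i, -, hi⟩ := exists_le_of_sum_le univ_nonempty this
  exact ⟨i, hi⟩

open SimpleGraph in
theorem decorated_tree_gives_alt_general {V : Type*} [Fintype V]
    (G : SimpleGraph V) (σ : Sym2 V → ℤ)
    (hσ : ∀ e ∈ G.edgeSet, σ e = 1 ∨ σ e = -1)
    (k r : ℕ) (hk : 0 < k) (w : Fin k → V → ℤ)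
    (R : Set V) (hR : R = {v | ∃ i, w i v ≠ 0})
    (T : G.Subgraph) (hT : T.coe.IsTree)
    (hdec : r ≤ ({v ∈ T.verts | (T.neighborSet v).ncard = 1} ∩ R).ncard) :
    ∃ i : Fin k, ∃ T' : G.Subgraph, T'.coe.IsTree ∧
      ∃ A B : Finset V, Disjoint A B ∧ (↑A ∪ ↑B : Set V) = T'.verts ∧
        (∀ u v, T'.Adj u v → (σ s(u, v) = 1 ↔ (u ∈ A ↔ v ∈ A))) ∧
        (r : ℚ) / (2 * k) ≤ |((∑ v ∈ A, w i v - ∑ v ∈ B, w i v : ℤ) : ℚ)| := by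
  classical
  set L := ({v ∈ T.verts | (T.neighborSet v).ncard = 1} ∩ R).toFinite.toFinset
  have hL : ∀ v ∈ L, v ∈ T.verts ∧ (T.neighborSet v).ncard = 1 ∧ ∃ i, w i v ≠ 0 := by
    intro v hv
    simpa [L, hR, and_assoc] using hv
  have : Nonempty (Fin k) := ⟨⟨0, hk⟩⟩
  obtain ⟨i, hi⟩ := exists_card_le_mul_card_of_subset_biUnion
    (t := fun i => L.filter (w i · ≠ 0)) fun v hv =>
      let ⟨j, hj⟩ := (hL v hv).2.2
      mem_biUnion.2 ⟨j, mem_univ _, mem_filter.2 ⟨hv, hj⟩⟩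
  set F := L.filter (w i · ≠ 0)
  obtain ⟨ε, hε, hεσ⟩ := T.exists_isUnit_sign_of_isTree hT σ fun e he =>
    Int.isUnit_iff.2 (hσ e (T.edgeSet_subset he))
  obtain ⟨T', hT'T, hT', U, hU, hF⟩ := Subgraph.exists_subtree_card_le_two_mul_abs_sum hT
    (fun v => ε v * w i v) F fun v hv => by
      obtain ⟨hvL, hwv⟩ := mem_filter.1 hv
      obtain ⟨hvT, hleaf, -⟩ := hL v hvL
      obtain ⟨a, ha⟩ := Set.ncard_eq_one.1 hleaf
      exact ⟨hvT, ha ▸ Set.subsingleton_singleton, mul_ne_zero (hε v).ne_zero hwv⟩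
  obtain ⟨A, B, hAB, hABT', hsign, hsum⟩ :=
    Subgraph.exists_bipartition_of_sign σ hU hε (fun u v h => hεσ u v (hT'T.2 h)) (w i)
  refine ⟨i, T', hT', A, B, hAB, hABT', hsign, ?_⟩
  have hr : r ≤ k * #F := by
    simpa using hdec.trans_eq (Set.ncard_eq_toFinset_card _ _) |>.trans hi
  rw [hsum, div_le_iff₀ (by positivity)]
  calc (r : ℚ) ≤ k * #F := by exact_mod_cast hr
    _ ≤ k * (2 * |∑ v ∈ U, ε v * w i v|) := by gcongr; exact_mod_cast hF
    _ = _ := by push_cast; ring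

/-- If the underlying graph of a signed graph `S` contains a subtree with at least `r`
leaves that are terminals (vertices with nonzero weight for one of the `k` weight
functions), then for some `i`, the alternating weight `alt(S, wᵢ)` is at least
`r / (2k)`: some subtree with its sign-bipartition witnesses this value. -/
theorem decorated_tree_gives_alt {V : Type*} [Fintype V] [DecidableEq V]
    (G : SimpleGraph V) (σ : Sym2 V → ℤ)
    (hσ : ∀ e ∈ G.edgeSet, σ e = 1 ∨ σ e = -1)
    (k r : ℕ) (hk : 0 < k) (w : Fin k → V → ℤ)
    (R : Set V) (hR : R = {v | ∃ i, w i v ≠ 0})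
    (T : G.Subgraph) (hT : T.coe.IsTree)
    (hdec : r ≤ ({v ∈ T.verts | (T.neighborSet v).ncard = 1} ∩ R).ncard) :
    ∃ i : Fin k, ∃ T' : G.Subgraph, T'.coe.IsTree ∧
      ∃ A B : Finset V, Disjoint A B ∧ (↑A ∪ ↑B : Set V) = T'.verts ∧
        (∀ u v, T'.Adj u v → (σ s(u, v) = 1 ↔ (u ∈ A ↔ v ∈ A))) ∧
        (r : ℚ) / (2 * k) ≤ |((∑ v ∈ A, w i v - ∑ v ∈ B, w i v : ℤ) : ℚ)| :=
  decorated_tree_gives_alt_general G σ hσ k r hk w R hR T hT hdec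
end

section
/- Let G be a connected graph with terminals R = \{v_0, ..., v_\alpha\} such that each v_i (1 \le i \le \alpha - 1) is a cutvertex separating v_0 from v_\alpha. Then there exists an ordering of R such that every v_0–v_\alpha path in G visits all terminals in that same order. -/
/-!
Fix one `v₀`–`v_α` path `p₀` and order the terminals by their position on it. Every terminal lies
on every `v₀`–`v_α` walk. If on some walk `q` a terminal `b` came strictly before a terminal `v`
that precedes it on `p₀`, then `q` up to its first visit of `b`, followed by `p₀` from `b` on,
would be a `v₀`–`v_α` walk avoiding `v`.
-/

open SimpleGraph

namespace SimpleGraph.Walk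

variable {V : Type*} {G : SimpleGraph V}

lemma mem_support_of_not_reachable_induce {u w v : V} (hu : u ∈ {x | x ≠ v})
    (hw : w ∈ {x | x ≠ v}) (h : ¬ (G.induce {x | x ≠ v}).Reachable ⟨u, hu⟩ ⟨w, hw⟩)
    (p : G.Walk u w) : v ∈ p.support := by
  by_contra hv
  exact h (p.induce {x | x ≠ v} fun x hx hxv => hv (hxv ▸ hx)).reachable

variable [DecidableEq V]

lemma mem_support_takeUntil_iff {u w b v : V} (p : G.Walk u w) (hb : b ∈ p.support) :
    v ∈ (p.takeUntil b hb).support ↔ p.support.idxOf v ≤ p.support.idxOf b := by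
  rw [takeUntil_eq_take, support_copy, support_take]
  by_cases hv : v ∈ p.support
  · rw [List.mem_take_iff_idxOf_lt hv, Nat.lt_succ_iff]
  · have hb' := List.idxOf_lt_length_of_mem hb
    rw [List.idxOf_eq_length hv]
    exact iff_of_false (fun h => hv (List.mem_of_mem_take h)) (by omega)

lemma IsPath.idxOf_le_idxOf_end {u w x : V} {p : G.Walk u w} (hp : p.IsPath)
    (hx : x ∈ p.support) : p.support.idxOf x ≤ p.support.idxOf w := by
  rcases eq_or_ne w x with rfl | hwx
  · rfl
  · have := endpoint_notMem_support_takeUntil hp hx hwx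
    rw [mem_support_takeUntil_iff] at this
    omega

lemma IsPath.eq_of_mem_support_takeUntil_of_mem_support_dropUntil {u w b v : V}
    {p : G.Walk u w} (hp : p.IsPath) (hb : b ∈ p.support)
    (ht : v ∈ (p.takeUntil b hb).support) (hd : v ∈ (p.dropUntil b hb).support) : v = b := by
  have hnd := hp.support_nodup
  rw [← p.take_spec hb, support_append] at hnd
  rw [← cons_tail_support] at hd
  rcases List.mem_cons.mp hd with rfl | hd
  · rfl
  · exact absurd hd (List.disjoint_of_nodup_append hnd ht)

theorem idxOf_le_idxOf_of_forall_mem_support {u w v b : V}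
    (hv : ∀ r : G.Walk u w, v ∈ r.support) {p : G.Walk u w} (hp : p.IsPath)
    (hb : b ∈ p.support) (hvb : p.support.idxOf v ≤ p.support.idxOf b) (q : G.Walk u w) :
    q.support.idxOf v ≤ q.support.idxOf b := by
  by_contra! hbv
  have hbq : b ∈ q.support :=
    List.idxOf_lt_length_iff.mp (hbv.trans_le (List.idxOf_le_length ..))
  have hvt : v ∉ (q.takeUntil b hbq).support := by
    rw [mem_support_takeUntil_iff]
    omega
  have hvd : v ∉ (p.dropUntil b hb).support := fun hd => by
    obtain rfl := hp.eq_of_mem_support_takeUntil_of_mem_support_dropUntil hb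
      ((mem_support_takeUntil_iff p hb).mpr hvb) hd
    exact lt_irrefl _ hbv
  have := hv ((q.takeUntil b hbq).append (p.dropUntil b hb))
  rw [mem_support_append_iff] at this
  tauto

end SimpleGraph.Walk

namespace Tuple

variable {α : Type*} [LinearOrder α] {n : ℕ} {f : Fin (n + 1) → α}

lemma sort_zero_of_forall_le (hf : Function.Injective f) (h : ∀ i, f 0 ≤ f i) :
    sort f 0 = 0 := by
  have := monotone_sort f (Fin.zero_le ((sort f).symm 0))
  simp only [Function.comp_apply, Equiv.apply_symm_apply] at this
  exact hf (this.antisymm (h _))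

lemma sort_last_of_forall_le (hf : Function.Injective f) (h : ∀ i, f i ≤ f (Fin.last n)) :
    sort f (Fin.last n) = Fin.last n := by
  have := monotone_sort f (Fin.le_last ((sort f).symm (Fin.last n)))
  simp only [Function.comp_apply, Equiv.apply_symm_apply] at this
  exact hf ((h _).antisymm this)

end Tuple

theorem terminals_ordered_on_paths_general {V : Type*} [DecidableEq V]
    (G : SimpleGraph V) (hG : G.Connected)
    (α : ℕ) (vs : Fin (α + 1) → V) (hinj : Function.Injective vs)
    (hsep : ∀ i : Fin (α + 1), 0 < i.val → i.val < α →
      ∀ (h0 : vs 0 ∈ {x | x ≠ vs i}) (hα : vs (Fin.last α) ∈ {x | x ≠ vs i}),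
        ¬ (G.induce {x | x ≠ vs i}).Reachable ⟨vs 0, h0⟩ ⟨vs (Fin.last α), hα⟩) :
    ∃ π : Equiv.Perm (Fin (α + 1)), π 0 = 0 ∧ π (Fin.last α) = Fin.last α ∧
      ∀ (p : G.Walk (vs 0) (vs (Fin.last α))), p.IsPath →
        ∀ i j : Fin (α + 1), i ≤ j →
          List.idxOf (vs (π i)) p.support ≤ List.idxOf (vs (π j)) p.support := by
  have hmem : ∀ i (r : G.Walk (vs 0) (vs (Fin.last α))), vs i ∈ r.support := by
    intro i r
    rcases eq_or_ne i 0 with rfl | h0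
    · exact r.start_mem_support
    rcases eq_or_ne i (Fin.last α) with rfl | hα
    · exact r.end_mem_support
    exact Walk.mem_support_of_not_reachable_induce _ _
      (hsep i (Nat.pos_of_ne_zero (Fin.val_ne_zero_iff.mpr h0)) (Fin.val_lt_last hα)
        (hinj.ne h0.symm) (hinj.ne hα.symm)) r
  obtain ⟨p₀, hp₀⟩ := (hG.preconnected (vs 0) (vs (Fin.last α))).exists_isPath
  set k : Fin (α + 1) → ℕ := fun i => p₀.support.idxOf (vs i)
  have hk : Function.Injective k := fun i j h => hinj ((List.idxOf_inj (hmem i p₀)).mp h)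
  have hk0 : k 0 = 0 := by
    simp only [k]
    rw [← p₀.cons_tail_support]
    exact List.idxOf_cons_self
  refine ⟨Tuple.sort k, Tuple.sort_zero_of_forall_le hk fun i => hk0.trans_le (Nat.zero_le _),
    Tuple.sort_last_of_forall_le hk fun i => hp₀.idxOf_le_idxOf_end (hmem i p₀),
    fun p _ i j hij => ?_⟩
  exact Walk.idxOf_le_idxOf_of_forall_mem_support (hmem _) hp₀ (hmem _ p₀)
    (Tuple.monotone_sort k hij) p

/-- If each intermediate terminal is a cutvertex separating `v₀` from `v_α`, then
there is an ordering of the terminals (fixing the endpoints) in which every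
`v₀`–`v_α` path visits all terminals. -/
theorem terminals_ordered_on_paths {V : Type*} [Fintype V] [DecidableEq V]
    (G : SimpleGraph V) (hG : G.Connected)
    (α : ℕ) (vs : Fin (α + 1) → V) (hinj : Function.Injective vs)
    (hsep : ∀ i : Fin (α + 1), 0 < i.val → i.val < α →
      ∀ (h0 : vs 0 ∈ {x | x ≠ vs i}) (hα : vs (Fin.last α) ∈ {x | x ≠ vs i}),
        ¬ (G.induce {x | x ≠ vs i}).Reachable ⟨vs 0, h0⟩ ⟨vs (Fin.last α), hα⟩) :
    ∃ π : Equiv.Perm (Fin (α + 1)), π 0 = 0 ∧ π (Fin.last α) = Fin.last α ∧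
      ∀ (p : G.Walk (vs 0) (vs (Fin.last α))), p.IsPath →
        ∀ i j : Fin (α + 1), i ≤ j →
          List.idxOf (vs (π i)) p.support ≤ List.idxOf (vs (π j)) p.support :=
  terminals_ordered_on_paths_general G hG α vs hinj hsep
end
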